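/- Let D be a positive integer with D ≡ 2 (mod 16), and let ρ′ be the ℚ-algebra homomorphism from Q = (−2, D)_ℚ into 2×2 complex matrices determined by ρ′(i) = [[√−2, 2√−2·B/A],[0, −√−2]] and ρ′(j) = [[−B, (D − B²)/A],[A, B]] with A = 4 and B = −√−2. Then the set {α ∈ Q : all four entries of ρ′(α) lie in O₂} is exactly the ℤ-submodule of Q spanned by 1, i, (3i + j)/4, and (2 + ij)/4; i.e. this set is the ℤ-order ℤ[1, i, (3i+j)/4, (2+ij)/4]. -/
import Mathlib


open Quaternion

/-- √−2 : the complex number with square −2 and positive imaginary part. -/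
noncomputable def sqrtNeg2 : ℂ := Real.sqrt 2 * Complex.I

/-- Membership in the ring O₂ = ℤ[√−2] ⊆ ℂ. -/
def InO2 (a : ℂ) : Prop := ∃ m n : ℤ, a = (m : ℂ) + (n : ℂ) * sqrtNeg2

lemma hs2 : sqrtNeg2 ^ 2 = -2 := by
  simp only [sqrtNeg2, mul_pow, Complex.I_sq, mul_neg_one]
  norm_cast
  rw [Real.sq_sqrt] <;> norm_num

lemma hs3 : sqrtNeg2 ^ 3 = -2 * sqrtNeg2 := by
  rw [pow_succ, hs2]

lemma entries (D : ℤ) (ρ' : ℍ[ℚ, -2, (D : ℚ)] →ₐ[ℚ] Matrix (Fin 2) (Fin 2) ℂ)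
    (hi : ρ' (⟨0, 1, 0, 0⟩ : ℍ[ℚ, -2, (D : ℚ)]) =
      !![sqrtNeg2, 2 * sqrtNeg2 * (-sqrtNeg2) / (4 : ℂ); 0, -sqrtNeg2])
    (hj : ρ' (⟨0, 0, 1, 0⟩ : ℍ[ℚ, -2, (D : ℚ)]) =
      !![-(-sqrtNeg2), ((D : ℂ) - (-sqrtNeg2) ^ 2) / (4 : ℂ); (4 : ℂ), (-sqrtNeg2)])
    (x y z w : ℚ) :
    ρ' ⟨x, y, z, w⟩ =
      !![((x+2*w : ℚ) : ℂ) + ((y+z : ℚ) : ℂ) * sqrtNeg2,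
         ((y + z*(D+2)/4 : ℚ) : ℂ) + ((w*(D-2)/4 : ℚ) : ℂ) * sqrtNeg2;
         ((4*z : ℚ) : ℂ) + ((-4*w : ℚ) : ℂ) * sqrtNeg2,
         ((x-2*w : ℚ) : ℂ) + ((-y-z : ℚ) : ℂ) * sqrtNeg2] := by
  have hrepr : (⟨x,y,z,w⟩ : ℍ[ℚ,-2,(D:ℚ)]) = x • 1 + y • (⟨0,1,0,0⟩:ℍ[ℚ,-2,(D:ℚ)])
      + z • ⟨0,0,1,0⟩ + w • ((⟨0,1,0,0⟩:ℍ[ℚ,-2,(D:ℚ)]) * ⟨0,0,1,0⟩) := by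
    ext <;> simp
  rw [hrepr, map_add, map_add, map_add, map_smul, map_smul, map_smul, map_smul,
    map_mul, map_one, hi, hj]
  ext k l
  fin_cases k <;> fin_cases l <;>
    simp [Matrix.one_fin_two, Matrix.mul_fin_two, Matrix.smul_apply, Rat.smul_def] <;>
    push_cast <;> ring_nf <;> simp [hs2, hs3] <;> ring

lemma inO2_iff (q r : ℚ) : InO2 ((q:ℂ) + (r:ℂ) * sqrtNeg2) ↔ (∃ m:ℤ, q = m) ∧ (∃ n:ℤ, r = n) := by
  constructor
  · rintro ⟨m, n, h⟩
    rw [Complex.ext_iff] at h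
    simp [sqrtNeg2] at h
    exact ⟨⟨m, by exact_mod_cast h.1⟩, ⟨n, by exact_mod_cast h.2⟩⟩
  · rintro ⟨⟨m, hm⟩, ⟨n, hn⟩⟩
    exact ⟨m, n, by rw [hm, hn]; push_cast; ring⟩

lemma span_iff (D : ℚ) (α : ℍ[ℚ,-2,D]) :
    α ∈ Submodule.span ℤ ({1, ⟨0, 1, 0, 0⟩, ⟨0, 3/4, 1/4, 0⟩, ⟨1/2, 0, 0, 1/4⟩} :
        Set ℍ[ℚ,-2,D]) ↔
    ∃ a b c d : ℤ, α = ⟨a + d/2, b + 3*c/4, c/4, d/4⟩ := by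
  rw [Submodule.mem_span_insert]
  simp only [Submodule.mem_span_insert, Submodule.mem_span_singleton]
  constructor
  · rintro ⟨a, _, ⟨b, _, ⟨c, _, ⟨d, rfl⟩, rfl⟩, rfl⟩, rfl⟩
    refine ⟨a, b, c, d, ?_⟩
    ext <;> simp <;> ring
  · rintro ⟨a, b, c, d, rfl⟩
    refine ⟨a, _, ⟨b, _, ⟨c, _, ⟨d, rfl⟩, rfl⟩, rfl⟩, ?_⟩
    ext <;> simp <;> ring

/-- For D ≡ 2 (mod 16), with A = 4, B = −√−2, the entries-in-O₂ set is the ℤ-order ℤ[1, i, (3i+j)/4, (2+ij)/4]. -/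
theorem stmt_6 (D : ℤ) (hD : 0 < D) (hmod : D % 16 = 2)
    (ρ' : ℍ[ℚ, -2, (D : ℚ)] →ₐ[ℚ] Matrix (Fin 2) (Fin 2) ℂ)
    (hi : ρ' (⟨0, 1, 0, 0⟩ : ℍ[ℚ, -2, (D : ℚ)]) =
      !![sqrtNeg2, 2 * sqrtNeg2 * (-sqrtNeg2) / (4 : ℂ); 0, -sqrtNeg2])
    (hj : ρ' (⟨0, 0, 1, 0⟩ : ℍ[ℚ, -2, (D : ℚ)]) =
      !![-(-sqrtNeg2), ((D : ℂ) - (-sqrtNeg2) ^ 2) / (4 : ℂ); (4 : ℂ), (-sqrtNeg2)]) :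
    {α : ℍ[ℚ, -2, (D : ℚ)] | ∀ k l : Fin 2, InO2 (ρ' α k l)} =
    (Submodule.span ℤ
      ({1, ⟨0, 1, 0, 0⟩, ⟨0, 3/4, 1/4, 0⟩, ⟨1/2, 0, 0, 1/4⟩} :
        Set ℍ[ℚ, -2, (D : ℚ)]) : Set ℍ[ℚ, -2, (D : ℚ)]) := by
  obtain ⟨t, ht⟩ : ∃ t : ℤ, D = 16 * t + 2 := ⟨D / 16, by omega⟩
  have htq : (D : ℚ) = 16 * (t : ℚ) + 2 := by rw [ht]; push_cast; ring
  ext α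
  obtain ⟨x, y, z, w⟩ := α
  simp only [Set.mem_setOf_eq, SetLike.mem_coe, span_iff,
    entries D ρ' hi hj x y z w, Fin.forall_fin_two, Matrix.of_apply,
    Matrix.cons_val', Matrix.cons_val_zero, Matrix.cons_val_one, Matrix.head_cons,
    Matrix.empty_val', Matrix.cons_val_fin_one, Matrix.head_fin_const, inO2_iff,
    QuaternionAlgebra.mk.injEq]
  constructor
  · rintro ⟨⟨⟨⟨m1, h1⟩, ⟨n1, hn1⟩⟩, ⟨⟨m2, h2⟩, ⟨n2, hn2⟩⟩⟩,
      ⟨⟨m3, h3⟩, ⟨n3, hn3⟩⟩, ⟨m4, h4⟩, ⟨n4, hn4⟩⟩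
    exact ⟨m4, n1 - m3, m3, -n3, by push_cast; linarith, by push_cast; linarith,
      by push_cast; linarith, by push_cast; linarith⟩
  · rintro ⟨a, b, c, d, rfl, rfl, rfl, rfl⟩
    refine ⟨⟨⟨⟨a + d, ?_⟩, ⟨b + c, ?_⟩⟩, ⟨b + c + t*c, ?_⟩, ⟨t*d, ?_⟩⟩,
      ⟨⟨c, ?_⟩, ⟨-d, ?_⟩⟩, ⟨a, ?_⟩, ⟨-b - c, ?_⟩⟩ <;>
      (try rw [htq]) <;> push_cast <;> ring
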